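/- arXiv:math/0502074 — 3 statements merged into one kernel-verified Lean document; each statement's English description precedes it below -/
import Mathlib

section
/- Let R be a commutative Noetherian ring and let 0 → L → M → N → 0 be a short exact sequence of R-modules. Then M is weakly Laskerian if and only if both L and N are weakly Laskerian. -/
/-!
For `N' ≤ L` and `K ≤ N`, the quotient `L ⧸ N'` embeds into `M ⧸ f(N')` and `N ⧸ K` is isomorphic
to `M ⧸ g⁻¹(K)`, so quotients of `L` and `N` have no more associated primes than quotients of `M`.
Conversely, for `P ≤ M` the sequence `0 → L ⧸ f⁻¹(P) → M ⧸ P → N ⧸ g(P)` is exact, and the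
associated primes of the middle term of such a sequence lie among those of its ends.
-/

open CategoryTheory Opposite

universe u

/-- A module is weakly Laskerian if every quotient has finitely many associated primes. -/
def IsWeaklyLaskerian (R : Type u) [CommRing R] (M : Type u) [AddCommGroup M]
    [Module R M] : Prop :=
  ∀ N : Submodule R M, (associatedPrimes R (M ⧸ N)).Finite

open Submodule

section

variable {R : Type u} [CommRing R] {L M N : Type u} [AddCommGroup L] [Module R L]
  [AddCommGroup M] [Module R M] [AddCommGroup N] [Module R N]

theorem Submodule.injective_mapQ_comap (f : M →ₗ[R] N) (q : Submodule R N) :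
    Function.Injective ((q.comap f).mapQ q f le_rfl) := by
  rw [← LinearMap.ker_eq_bot, ker_mapQ, mkQ_map_self]

theorem associatedPrimes_quotient_comap_subset (f : M →ₗ[R] N) (q : Submodule R N) :
    associatedPrimes R (M ⧸ q.comap f) ⊆ associatedPrimes R (N ⧸ q) :=
  associatedPrimes.subset_of_injective (injective_mapQ_comap f q)

theorem associatedPrimes_quotient_comap_of_surjective {f : M →ₗ[R] N}
    (hf : Function.Surjective f) (q : Submodule R N) :
    associatedPrimes R (M ⧸ q.comap f) = associatedPrimes R (N ⧸ q) :=
  LinearEquiv.AssociatedPrimes.eq <| LinearEquiv.ofBijective _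
    ⟨injective_mapQ_comap f q, by
      rw [← LinearMap.range_eq_top, range_mapQ, LinearMap.range_eq_top.mpr hf, Submodule.map_top,
        range_mkQ]⟩

theorem IsWeaklyLaskerian.of_injective {f : L →ₗ[R] M} (hf : Function.Injective f)
    (hM : IsWeaklyLaskerian R M) : IsWeaklyLaskerian R L := fun N' => by
  rw [← comap_map_eq_of_injective hf N']
  exact (hM _).subset (associatedPrimes_quotient_comap_subset f _)

theorem IsWeaklyLaskerian.of_surjective {g : M →ₗ[R] N} (hg : Function.Surjective g)
    (hM : IsWeaklyLaskerian R M) : IsWeaklyLaskerian R N := fun K => by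
  rw [← associatedPrimes_quotient_comap_of_surjective hg K]
  exact hM _

theorem IsWeaklyLaskerian.of_exact {f : L →ₗ[R] M} {g : M →ₗ[R] N} (hfg : Function.Exact f g)
    (hL : IsWeaklyLaskerian R L) (hN : IsWeaklyLaskerian R N) : IsWeaklyLaskerian R M := by
  intro P
  have hexact : Function.Exact ((P.comap f).mapQ P f le_rfl)
      (P.mapQ (P.map g) g (le_comap_map g P)) :=
    (hfg.exact_mapQ_iff _ _).mpr inf_le_right
  exact ((hL _).union (hN _)).subset
    (associatedPrimes.subset_union_of_exact (injective_mapQ_comap f P) hexact)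

end

theorem isWeaklyLaskerian_iff_of_shortExact_general (R : Type u) [CommRing R]
    (L M N : Type u) [AddCommGroup L] [Module R L] [AddCommGroup M] [Module R M]
    [AddCommGroup N] [Module R N] (f : L →ₗ[R] M) (g : M →ₗ[R] N)
    (hf : Function.Injective f) (hg : Function.Surjective g) (hfg : Function.Exact f g) :
    IsWeaklyLaskerian R M ↔ IsWeaklyLaskerian R L ∧ IsWeaklyLaskerian R N :=
  ⟨fun hM => ⟨hM.of_injective hf, hM.of_surjective hg⟩, fun ⟨hL, hN⟩ => hL.of_exact hfg hN⟩

theorem isWeaklyLaskerian_iff_of_shortExact (R : Type u) [CommRing R] [IsNoetherianRing R]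
    (L M N : Type u) [AddCommGroup L] [Module R L] [AddCommGroup M] [Module R M]
    [AddCommGroup N] [Module R N] (f : L →ₗ[R] M) (g : M →ₗ[R] N)
    (hf : Function.Injective f) (hg : Function.Surjective g) (hfg : Function.Exact f g) :
    IsWeaklyLaskerian R M ↔ IsWeaklyLaskerian R L ∧ IsWeaklyLaskerian R N :=
  isWeaklyLaskerian_iff_of_shortExact_general R L M N f g hf hg hfg
end

section
/- Let R be a commutative Noetherian ring, M a weakly Laskerian R-module, and N a finitely generated R-module. Then Ext^i_R(N, M) is weakly Laskerian for all i ≥ 0. -/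
open CategoryTheory Opposite

universe u

/-!
Weakly Laskerian modules are closed under submodules, quotients and extensions, hence under
finite direct sums. So `Hom_R(F, M)` is weakly Laskerian for every finitely generated `F`: a
surjection `R^c ↠ F` embeds it into `Hom_R(R^c, M) ≅ M^c`. Over a Noetherian ring, syzygies of
finitely generated modules are finitely generated, so `N` has a projective resolution `F_•` by
finite free modules, and `Ext^i_R(N, M)`, the `i`-th cohomology of `Hom_R(F_•, M)`, is a
subquotient of `Hom_R(F_i, M)`.
-/

namespace IsWeaklyLaskerian

variable {R : Type u} [CommRing R] {M M' M'' : Type u} [AddCommGroup M] [Module R M]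
  [AddCommGroup M'] [Module R M'] [AddCommGroup M''] [Module R M'']

theorem finite_associatedPrimes (hM : IsWeaklyLaskerian R M) : (associatedPrimes R M).Finite :=
  (hM ⊥).subset
    (associatedPrimes.subset_of_injective (Submodule.quotEquivOfEqBot ⊥ rfl).symm.injective)

theorem of_surjective_s2 (hM : IsWeaklyLaskerian R M) (f : M →ₗ[R] M')
    (hf : Function.Surjective f) : IsWeaklyLaskerian R M' := fun N ↦ by
  rw [← LinearEquiv.AssociatedPrimes.eq
    ((N.mkQ ∘ₗ f).quotKerEquivOfSurjective (N.mkQ_surjective.comp hf))]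
  exact hM _

theorem of_linearEquiv (hM : IsWeaklyLaskerian R M) (e : M ≃ₗ[R] M') : IsWeaklyLaskerian R M' :=
  hM.of_surjective_s2 e e.surjective

theorem of_injective_s2 (hM : IsWeaklyLaskerian R M) (f : M' →ₗ[R] M)
    (hf : Function.Injective f) : IsWeaklyLaskerian R M' := fun N ↦ by
  refine (hM (N.map f)).subset
    (associatedPrimes.subset_of_injective (f := N.mapQ _ f (N.le_comap_map f)) ?_)
  rw [← LinearMap.ker_eq_bot, Submodule.ker_mapQ, Submodule.comap_map_eq_of_injective hf,
    Submodule.mkQ_map_self]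

theorem of_subsingleton [Subsingleton M] : IsWeaklyLaskerian R M := fun N ↦ by
  have : Subsingleton (M ⧸ N) := N.mkQ_surjective.subsingleton
  simp [associatedPrimes.eq_empty_of_subsingleton]

theorem of_submodule_quotient (A : Submodule R M) (hA : IsWeaklyLaskerian R A)
    (hMA : IsWeaklyLaskerian R (M ⧸ A)) : IsWeaklyLaskerian R M := fun N ↦ by
  let A' := A.map N.mkQ
  have hA' : (associatedPrimes R A').Finite :=
    (hA.of_surjective_s2 _ (N.mkQ.submoduleMap_surjective A)).finite_associatedPrimes
  -- `(M ⧸ N) ⧸ A' ≅ M ⧸ (N ⊔ A)` is a quotient of `M ⧸ A`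
  have hQA' : (associatedPrimes R ((M ⧸ N) ⧸ A')).Finite := by
    rw [LinearEquiv.AssociatedPrimes.eq ((N.quotientQuotientEquivQuotientSup A).trans
      (A.quotientQuotientEquivQuotient (N ⊔ A) le_sup_right).symm)]
    exact hMA _
  exact (hA'.union hQA').subset
    (associatedPrimes.subset_union_of_exact A'.injective_subtype (LinearMap.exact_subtype_mkQ A'))

theorem of_exact_s2 {f : M →ₗ[R] M'} {g : M' →ₗ[R] M''} (hfg : Function.Exact f g)
    (hg : Function.Surjective g) (hM : IsWeaklyLaskerian R M) (hM'' : IsWeaklyLaskerian R M'') :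
    IsWeaklyLaskerian R M' :=
  of_submodule_quotient (LinearMap.range f) (hM.of_surjective_s2 _ f.surjective_rangeRestrict)
    (hM''.of_linearEquiv ((Submodule.quotEquivOfEq _ _ hfg.linearMap_ker_eq.symm).trans
      (g.quotKerEquivOfSurjective hg)).symm)

theorem prod (hM : IsWeaklyLaskerian R M) (hM' : IsWeaklyLaskerian R M') :
    IsWeaklyLaskerian R (M × M') :=
  of_exact_s2 .inl_snd LinearMap.snd_surjective hM hM'

theorem pi (hM : IsWeaklyLaskerian R M) : ∀ n : ℕ, IsWeaklyLaskerian R (Fin n → M)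
  | 0 => of_subsingleton
  | n + 1 => (hM.prod (pi hM n)).of_linearEquiv (Fin.consLinearEquiv R fun _ ↦ M)

theorem linearMap (hM : IsWeaklyLaskerian R M) (X : Type u) [AddCommGroup X] [Module R X]
    [Module.Finite R X] : IsWeaklyLaskerian R (X →ₗ[R] M) := by
  obtain ⟨c, π, hπ⟩ := Module.Finite.exists_fin' R X
  exact ((hM.pi c).of_linearEquiv ((Pi.basisFun R (Fin c)).constr R)).of_injective_s2
    (LinearMap.lcomp R M π) fun f f' h ↦ (LinearMap.cancel_right hπ).1 h

end IsWeaklyLaskerian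

theorem CategoryTheory.ShortComplex.isWeaklyLaskerian_homology {R : Type u} [CommRing R]
    (S : ShortComplex (ModuleCat.{u} R)) (h : IsWeaklyLaskerian R S.X₂) :
    IsWeaklyLaskerian R S.homology :=
  ((h.of_injective_s2 _ (LinearMap.ker S.g.hom).injective_subtype).of_surjective_s2 _
    (Submodule.mkQ_surjective _)).of_linearEquiv S.moduleCatHomologyIso.symm.toLinearEquiv

namespace CategoryTheory.ProjectiveResolution

variable {C : Type*} [Category C] [Abelian C]

noncomputable def ofExact {Z : C} (P : ChainComplex C ℕ) [∀ n, Projective (P.X n)]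
    (π : P.X 0 ⟶ Z) [Epi π] (w : P.d 1 0 ≫ π = 0) (exact₀ : (ShortComplex.mk _ _ w).Exact)
    (exact : ∀ n, P.ExactAt (n + 1)) : ProjectiveResolution Z where
  complex := P
  π := (ChainComplex.toSingle₀Equiv _ _).symm ⟨π, w⟩
  quasiIso := ⟨fun
    | 0 => by
      rw [ChainComplex.quasiIsoAt₀_iff, ShortComplex.quasiIso_iff_of_zeros']
      · refine (ShortComplex.exact_and_epi_g_iff_of_iso ?_).2 ⟨exact₀, ‹_›⟩
        exact ShortComplex.isoMk (Iso.refl _) (Iso.refl _) (Iso.refl _)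
          ((Category.id_comp _).trans (Category.comp_id _).symm)
          ((Category.id_comp _).trans
            ((ChainComplex.toSingle₀Equiv_symm_apply_f_zero _ _).symm.trans
              (Category.comp_id _).symm))
      all_goals first | rfl | exact P.shape _ _ (by simp)
    | n + 1 => (quasiIsoAt_iff_exactAt' _ _ (ChainComplex.exactAt_succ_single_obj _ _)).2
        (exact n)⟩

end CategoryTheory.ProjectiveResolution

namespace Module.Finite

variable (R : Type*) [Semiring R] (X : Type*) [AddCommMonoid X] [Module R X] [Module.Finite R X]

noncomputable def coverRank : ℕ := (exists_fin' R X).choose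

noncomputable def cover : (Fin (coverRank R X) → R) →ₗ[R] X :=
  (exists_fin' R X).choose_spec.choose

theorem cover_surjective : Function.Surjective (cover R X) :=
  (exists_fin' R X).choose_spec.choose_spec

end Module.Finite

namespace FinFreeResolution

open Module.Finite

variable (R : Type u) [Ring R] [IsNoetherianRing R] (N : Type u) [AddCommGroup N] [Module R N]
  [Module.Finite R N]

/-- `(syzygy R N n).2` is the `(n + 1)`-st syzygy of `N`, as a submodule of the `n`-th free
module `Fin (syzygy R N n).1 → R` of the resolution. -/
noncomputable def syzygy : ℕ → Σ c : ℕ, Submodule R (Fin c → R)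
  | 0 => ⟨coverRank R N, LinearMap.ker (cover R N)⟩
  | n + 1 => ⟨coverRank R (syzygy n).2, LinearMap.ker (cover R (syzygy n).2)⟩

noncomputable def d (n : ℕ) :
    (Fin (syzygy R N (n + 1)).1 → R) →ₗ[R] (Fin (syzygy R N n).1 → R) :=
  (syzygy R N n).2.subtype ∘ₗ cover R (syzygy R N n).2

theorem range_d (n : ℕ) : LinearMap.range (d R N n) = (syzygy R N n).2 :=
  (LinearMap.range_comp_of_range_eq_top _ (LinearMap.range_eq_top.2 (cover_surjective _ _))).trans
    (Submodule.range_subtype _)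

theorem ker_d (n : ℕ) : LinearMap.ker (d R N n) = (syzygy R N (n + 1)).2 :=
  LinearMap.ker_comp_of_ker_eq_bot _ (Submodule.ker_subtype _)

theorem range_d_succ (n : ℕ) : LinearMap.range (d R N (n + 1)) = LinearMap.ker (d R N n) :=
  (range_d R N _).trans (ker_d R N n).symm

noncomputable def complex : ChainComplex (ModuleCat.{u} R) ℕ :=
  ChainComplex.of (fun n ↦ ModuleCat.of R (Fin (syzygy R N n).1 → R))
    (fun n ↦ ModuleCat.ofHom (d R N n)) fun n ↦
      ModuleCat.hom_ext (LinearMap.range_le_ker_iff.1 (range_d_succ R N n).le)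

theorem complex_d (n : ℕ) : (complex R N).d (n + 1) n = ModuleCat.ofHom (d R N n) :=
  ChainComplex.of_d (fun n ↦ ModuleCat.of R (Fin (syzygy R N n).1 → R))
    (fun n ↦ ModuleCat.ofHom (d R N n)) n

theorem complex_exactAt_succ (n : ℕ) : (complex R N).ExactAt (n + 1) := by
  rw [HomologicalComplex.exactAt_iff' _ (n + 1 + 1) (n + 1) n (by simp) (by simp),
    ShortComplex.moduleCat_exact_iff_range_eq_ker]
  simp only [HomologicalComplex.shortComplexFunctor'_obj_f,
    HomologicalComplex.shortComplexFunctor'_obj_g, complex_d]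
  exact range_d_succ R N n

noncomputable def augmentation : (complex R N).X 0 ⟶ ModuleCat.of R N :=
  ModuleCat.ofHom (cover R N)

instance : Epi (augmentation R N) :=
  (ModuleCat.epi_iff_surjective _).2 (cover_surjective R N)

theorem d_comp_augmentation : (complex R N).d 1 0 ≫ augmentation R N = 0 := by
  rw [complex_d]
  exact ModuleCat.hom_ext (LinearMap.range_le_ker_iff.1 (range_d R N 0).le)

theorem exact_augmentation : (ShortComplex.mk _ _ (d_comp_augmentation R N)).Exact := by
  rw [ShortComplex.moduleCat_exact_iff_range_eq_ker]
  simp only [complex_d]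
  exact range_d R N 0

instance (n : ℕ) : Projective ((complex R N).X n) :=
  ModuleCat.projective_of_free (Pi.basisFun R _)

instance (n : ℕ) : Module.Finite R ((complex R N).X n) :=
  inferInstanceAs (Module.Finite R (Fin _ → R))

end FinFreeResolution

open FinFreeResolution in
noncomputable def finFreeResolution (R : Type u) [Ring R] [IsNoetherianRing R] (N : Type u)
    [AddCommGroup N] [Module R N] [Module.Finite R N] : ProjectiveResolution (ModuleCat.of R N) :=
  .ofExact (complex R N) (augmentation R N) (d_comp_augmentation R N) (exact_augmentation R N)
    (complex_exactAt_succ R N)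

instance (R : Type u) [Ring R] [IsNoetherianRing R] (N : Type u) [AddCommGroup N] [Module R N]
    [Module.Finite R N] (n : ℕ) : Module.Finite R ((finFreeResolution R N).complex.X n) :=
  inferInstanceAs (Module.Finite R ((FinFreeResolution.complex R N).X n))

theorem isWeaklyLaskerian_ext (R : Type u) [CommRing R] [IsNoetherianRing R]
    (M N : Type u) [AddCommGroup M] [Module R M] [AddCommGroup N] [Module R N]
    (hM : IsWeaklyLaskerian R M) [Module.Finite R N] (i : ℕ) :
    IsWeaklyLaskerian R
      (((Ext R (ModuleCat.{u} R) i).obj (op (ModuleCat.of R N))).obj (ModuleCat.of R M)) := by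
  let P := finFreeResolution R N
  refine .of_linearEquiv ?_ (P.isoExt i (ModuleCat.of R M)).symm.toLinearEquiv
  refine ShortComplex.isWeaklyLaskerian_homology _ ?_
  exact (hM.linearMap (P.complex.X i)).of_linearEquiv
    (ModuleCat.homLinearEquiv (M := P.complex.X i) (N := ModuleCat.of R M) (S := R)).symm
end

section
/- Let R be a commutative Noetherian ring with a fixed maximal ideal m, and let M = ⊕_{i ∈ ℕ} R/m be a countable direct sum of copies of R/m. Then M is m-weakly cofinite but M does not have finite Goldie dimension (M contains an infinite direct sum of nonzero submodules). -/
/-!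
Everything in sight is killed by `m`: the direct sum `M` itself, every term `Hom(Pₙ, M)` of the
complex computing `Extⁿ(R/m, M)` from a projective resolution `P` of `R/m`, hence every
`Extⁿ(R/m, M)` (a subquotient of such a term) and all of its quotients. A module killed by the
maximal ideal `m` is supported in `V(m)` and has no associated prime other than `m`. The
summands of `M` form an infinite independent family of nonzero submodules.
-/

open CategoryTheory Opposite

universe u

/-- `a`-weakly cofinite: support in `V(a)` and all `Ext^i(R/a, M)` weakly Laskerian. -/
def IsWeaklyCofinite (R : Type u) [CommRing R] (a : Ideal R) (M : ModuleCat.{u} R) : Prop :=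
  Module.support R M ⊆ PrimeSpectrum.zeroLocus (a : Set R) ∧
  ∀ i : ℕ, IsWeaklyLaskerian R
    (((Ext R (ModuleCat.{u} R) i).obj (op (ModuleCat.of R (R ⧸ a)))).obj M)

universe v

lemma CategoryTheory.ShortComplex.annihilator_X₂_le_annihilator_homology {R : Type u} [Ring R]
    (S : ShortComplex (ModuleCat.{v} R)) :
    Module.annihilator R S.X₂ ≤ Module.annihilator R S.homology := by
  have hi : Function.Injective S.iCycles := (ModuleCat.mono_iff_injective _).mp inferInstance
  have hπ : Function.Surjective S.homologyπ := (ModuleCat.epi_iff_surjective _).mp inferInstance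
  exact (LinearMap.annihilator_le_of_injective S.iCycles.hom hi).trans
    (LinearMap.annihilator_le_of_surjective S.homologyπ.hom hπ)

lemma annihilator_le_annihilator_ext {R : Type u} [CommRing R] (X M : ModuleCat.{u} R) (n : ℕ) :
    Module.annihilator R M ≤
      Module.annihilator R (((Ext R (ModuleCat.{u} R) n).obj (op X)).obj M) := by
  let P := ProjectiveResolution.of X
  let K := P.complex.linearYonedaObj R M
  have hHom : Module.annihilator R M ≤ Module.annihilator R (K.X n) := fun r hr =>
    Module.mem_annihilator.mpr fun f => ModuleCat.hom_ext (LinearMap.ext fun x =>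
      Module.mem_annihilator.mp hr (f.hom x))
  rw [(P.isoExt n M).toLinearEquiv.annihilator_eq]
  exact hHom.trans (K.sc n).annihilator_X₂_le_annihilator_homology

section
variable {R : Type u} [CommRing R] {m : Ideal R}

lemma associatedPrimes_subset_singleton_of_le_annihilator {M : Type*} [AddCommGroup M]
    [Module R M] (hm : m.IsMaximal) (h : m ≤ Module.annihilator R M) :
    associatedPrimes R M ⊆ {m} := fun _ hp =>
  (hm.eq_of_le hp.isPrime.ne_top <| h.trans <|
    Submodule.annihilator_top (R := R) (M := M) ▸ hp.annihilator_le).symm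

lemma isWeaklyLaskerian_of_le_annihilator {M : Type u} [AddCommGroup M] [Module R M]
    (hm : m.IsMaximal) (h : m ≤ Module.annihilator R M) : IsWeaklyLaskerian R M := fun N =>
  (Set.finite_singleton m).subset <| associatedPrimes_subset_singleton_of_le_annihilator hm <|
    h.trans (N.mkQ.annihilator_le_of_surjective N.mkQ_surjective)

lemma support_subset_zeroLocus_of_le_annihilator {M : Type*} [AddCommGroup M] [Module R M]
    (h : m ≤ Module.annihilator R M) :
    Module.support R M ⊆ PrimeSpectrum.zeroLocus (m : Set R) := fun _ hp =>
  h.trans (Module.annihilator_le_of_mem_support hp)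

end

namespace DirectSum

variable {R : Type*} [Semiring R] {ι : Type*} [DecidableEq ι] (M : ι → Type*)
  [∀ i, AddCommMonoid (M i)] [∀ i, Module R (M i)]

lemma iSupIndep_range_lof : iSupIndep fun i => LinearMap.range (lof R ι M i) := by
  intro i
  rw [Submodule.disjoint_def]
  rintro _ ⟨x, rfl⟩ hx
  suffices ⨆ j, ⨆ (_ : j ≠ i), LinearMap.range (lof R ι M j) ≤
      LinearMap.ker (component R ι M i) by
    rw [show x = 0 by simpa using this hx, map_zero]
  refine iSup₂_le fun j hj => ?_
  rintro _ ⟨y, rfl⟩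
  simp [component.of, hj]

lemma range_lof_ne_bot (i : ι) [Nontrivial (M i)] : LinearMap.range (lof R ι M i) ≠ ⊥ := by
  rw [Ne, LinearMap.range_eq_bot]
  obtain ⟨x, hx⟩ := exists_ne (0 : M i)
  exact fun h => hx (of_injective (β := M) i (by simpa [lof_eq_of] using LinearMap.congr_fun h x))

end DirectSum

theorem weaklyCofinite_not_finite_goldie_general (R : Type u) [CommRing R]
    (m : Ideal R) (hm : m.IsMaximal) :
    IsWeaklyCofinite R m (ModuleCat.of R (DirectSum ℕ fun _ : ℕ => R ⧸ m)) ∧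
    ∃ f : ℕ → Submodule R (DirectSum ℕ fun _ : ℕ => R ⧸ m),
      (∀ i, f i ≠ ⊥) ∧ iSupIndep f := by
  have hann : Module.annihilator R (DirectSum ℕ fun _ : ℕ => R ⧸ m) = m :=
    Module.annihilator_dfinsupp.trans (by rw [Ideal.annihilator_quotient, iInf_const])
  have : Nontrivial (R ⧸ m) := Ideal.Quotient.nontrivial_iff.mpr hm.ne_top
  refine ⟨⟨support_subset_zeroLocus_of_le_annihilator hann.ge, fun i => ?_⟩,
    _, fun i => DirectSum.range_lof_ne_bot _ i, DirectSum.iSupIndep_range_lof _⟩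
  exact isWeaklyLaskerian_of_le_annihilator hm
    (hann.ge.trans (annihilator_le_annihilator_ext _ (.of R _) i))

theorem weaklyCofinite_not_finite_goldie (R : Type u) [CommRing R] [IsNoetherianRing R]
    (m : Ideal R) (hm : m.IsMaximal) :
    IsWeaklyCofinite R m (ModuleCat.of R (DirectSum ℕ fun _ : ℕ => R ⧸ m)) ∧
    ∃ f : ℕ → Submodule R (DirectSum ℕ fun _ : ℕ => R ⧸ m),
      (∀ i, f i ≠ ⊥) ∧ iSupIndep f :=
  weaklyCofinite_not_finite_goldie_general R m hm
end
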